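/- arXiv:2510.16965 — 5 statements merged into one kernel-verified Lean document; each statement's English description precedes it below -/
import Mathlib

section
/- Let s(a) = 1/(1 + exp(-a)) be the logistic function. For any real numbers a and b, the Kullback–Leibler divergence between Bernoulli(s(a)) and Bernoulli(s(b)), namely D(a,b) = s(a)·log(s(a)/s(b)) + (1 - s(a))·log((1-s(a))/(1-s(b))), satisfies D(a,b) ≤ (a - b)^2 / 8. -/
/-!
The Kullback–Leibler divergence between `Bernoulli (σ a)` and `Bernoulli (σ b)` is the Bregman
divergence `F b - F a - F' a * (b - a)` of the softplus function `F t = log (1 + exp t)`, whose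
derivative is the sigmoid `σ`. Since `σ' = σ (1 - σ) ≤ 1 / 4`, the second-order Taylor bound
gives `(b - a) ^ 2 / 8`.
-/

open Real Set

theorem image_le_add_deriv_mul_add_sq_of_deriv_sub_le {f f' : ℝ → ℝ} {L : ℝ}
    (hf : ∀ t, HasDerivAt f (f' t) t) (hf' : ∀ x y, y ≤ x → f' x - f' y ≤ L * (x - y))
    (a b : ℝ) : f b ≤ f a + f' a * (b - a) + L / 2 * (b - a) ^ 2 := by
  set g : ℝ → ℝ := fun t => f t - f' a * t - L / 2 * (t - a) ^ 2 with hg_def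
  have hg : ∀ t, HasDerivAt g (f' t - f' a - L * (t - a)) t := fun t =>
    (((hf t).sub ((hasDerivAt_id' t).const_mul (f' a))).sub
      ((((hasDerivAt_id' t).sub_const a).pow 2).const_mul (L / 2))).congr_deriv (by ring)
  have hg_cont : Continuous g := continuous_iff_continuousAt.2 fun t => (hg t).continuousAt
  suffices g b ≤ g a by simp only [hg_def] at this; linarith
  rcases le_total a b with hab | hba
  · refine antitoneOn_of_hasDerivWithinAt_nonpos (convex_Ici a) hg_cont.continuousOn
      (fun t _ => (hg t).hasDerivWithinAt) (fun t ht => ?_) self_mem_Ici hab hab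
    rw [interior_Ici] at ht
    linarith [hf' t a ht.le]
  · refine monotoneOn_of_hasDerivWithinAt_nonneg (convex_Iic a) hg_cont.continuousOn
      (fun t _ => (hg t).hasDerivWithinAt) (fun t ht => ?_) hba self_mem_Iic hba
    rw [interior_Iic] at ht
    linarith [hf' a t ht.le]

noncomputable def bernoulliKL (p q : ℝ) : ℝ :=
  p * log (p / q) + (1 - p) * log ((1 - p) / (1 - q))

noncomputable def softplus (t : ℝ) : ℝ := log (1 + exp t)

lemma exp_div_one_add_exp (t : ℝ) : exp t / (1 + exp t) = sigmoid t := by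
  rw [sigmoid_def, exp_neg]
  field_simp
  ring

lemma hasDerivAt_softplus (t : ℝ) : HasDerivAt softplus (sigmoid t) t := by
  rw [← exp_div_one_add_exp]
  exact ((hasDerivAt_exp t).const_add 1).log (by positivity)

lemma log_sigmoid (t : ℝ) : log (sigmoid t) = t - softplus t := by
  rw [← exp_div_one_add_exp, log_div (exp_ne_zero t) (by positivity), log_exp, softplus]

lemma log_one_sub_sigmoid (t : ℝ) : log (1 - sigmoid t) = -softplus t := by
  rw [← sigmoid_neg, sigmoid_def, neg_neg, log_inv, softplus]

lemma sigmoid_sub_sigmoid_le {x y : ℝ} (h : y ≤ x) :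
    sigmoid x - sigmoid y ≤ 1 / 4 * (x - y) :=
  image_sub_le_mul_sub_of_deriv_le differentiable_sigmoid
    (fun t => by rw [deriv_sigmoid]; nlinarith [sq_nonneg (2 * sigmoid t - 1)]) h

lemma bernoulliKL_sigmoid (a b : ℝ) :
    bernoulliKL (sigmoid a) (sigmoid b) = softplus b - softplus a - sigmoid a * (b - a) := by
  have hpos : ∀ t, 0 < 1 - sigmoid t := fun t => sub_pos.2 (sigmoid_lt_one t)
  rw [bernoulliKL, log_div (sigmoid_pos a).ne' (sigmoid_pos b).ne',
    log_div (hpos a).ne' (hpos b).ne', log_sigmoid, log_sigmoid, log_one_sub_sigmoid,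
    log_one_sub_sigmoid]
  ring

lemma bernoulliKL_sigmoid_le (a b : ℝ) :
    bernoulliKL (sigmoid a) (sigmoid b) ≤ (a - b) ^ 2 / 8 := by
  have := image_le_add_deriv_mul_add_sq_of_deriv_sub_le hasDerivAt_softplus
    (fun x y h => sigmoid_sub_sigmoid_le h) a b
  rw [bernoulliKL_sigmoid]
  linarith [show (b - a) ^ 2 = (a - b) ^ 2 by ring]

/-- KL divergence between `Bernoulli (s a)` and `Bernoulli (s b)` for the
logistic sigmoid `s` is at most `(a - b)² / 8`. -/
theorem stmt2 (s : ℝ → ℝ) (hs : ∀ t, s t = 1 / (1 + Real.exp (-t))) (a b : ℝ) :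
    s a * Real.log (s a / s b) + (1 - s a) * Real.log ((1 - s a) / (1 - s b))
      ≤ (a - b) ^ 2 / 8 := by
  obtain rfl : s = sigmoid := funext fun t => by rw [hs, sigmoid_def, one_div]
  exact bernoulliKL_sigmoid_le a b
end

section
/- Suppose a nonnegative sequence (f_t)_{t=0}^{T} satisfies f_t ≤ sqrt(a_0·f_{t-1}) + a_1 for all t in {1,...,T}, where a_0, a_1 > 0 and f_0 > 2a_1 + a_0. Then for all t in {0,...,T}, f_t ≤ (f_0/(2a_1 + a_0))^{2^{-t}} · (2a_1 + a_0). -/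
/-! The bound `b = 2a₁ + a₀` is a fixed point of `y ↦ √(a₀ y) + a₁` up to AM-GM:
`√(a₀ b) ≤ (a₀ + b)/2 = b - a₁`. So if `f_{t-1} ≤ x² b` with `x ≥ 1`, then
`f_t ≤ x √(a₀ b) + a₁ ≤ x b`; taking `x = (f₀/b)^{2^{-t}}` each step halves the exponent. -/

lemma sqrt_mul_add_le_mul_of_le_sq_mul {a₀ a₁ x y : ℝ} (ha₀ : 0 ≤ a₀) (ha₁ : 0 ≤ a₁)
    (hx : 1 ≤ x) (hy : y ≤ x ^ 2 * (2 * a₁ + a₀)) :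
    √(a₀ * y) + a₁ ≤ x * (2 * a₁ + a₀) := by
  set b := 2 * a₁ + a₀
  have hsqrt : √(a₀ * y) ≤ x * √(a₀ * b) :=
    calc √(a₀ * y) ≤ √(x ^ 2 * (a₀ * b)) :=
          Real.sqrt_le_sqrt (by nlinarith [mul_le_mul_of_nonneg_left hy ha₀])
      _ = x * √(a₀ * b) := by rw [Real.sqrt_mul (by positivity), Real.sqrt_sq (by linarith)]
  have hamgm : √(a₀ * b) ≤ (a₀ + b) / 2 := by
    rw [Real.sqrt_le_left (by positivity)]
    nlinarith [sq_nonneg (a₀ - b)]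
  nlinarith [mul_le_mul_of_nonneg_left hamgm (by linarith : (0 : ℝ) ≤ x)]

lemma Real.rpow_one_div_two_pow_succ_sq {r : ℝ} (hr : 0 ≤ r) (n : ℕ) :
    (r ^ ((1 : ℝ) / 2 ^ (n + 1))) ^ 2 = r ^ ((1 : ℝ) / 2 ^ n) := by
  rw [← Real.rpow_natCast, ← Real.rpow_mul hr]
  congr 1
  rw [pow_succ]
  field_simp
  norm_num

theorem stmt4_general (T : ℕ) (f : ℕ → ℝ) (a0 a1 : ℝ)
    (ha0 : 0 < a0) (ha1 : 0 < a1)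
    (hf0 : 2 * a1 + a0 < f 0)
    (hrec : ∀ t, 1 ≤ t → t ≤ T → f t ≤ Real.sqrt (a0 * f (t - 1)) + a1) :
    ∀ t ≤ T, f t ≤ (f 0 / (2 * a1 + a0)) ^ ((1 : ℝ) / 2 ^ t) * (2 * a1 + a0) := by
  set b := 2 * a1 + a0
  have hb : 0 < b := by positivity
  have hr : 1 ≤ f 0 / b := (one_le_div hb).2 hf0.le
  intro t
  induction t with
  | zero => intro _; simp [hb.ne']
  | succ n ih =>
    intro hn
    calc f (n + 1) ≤ √(a0 * f n) + a1 := hrec (n + 1) (by omega) hn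
      _ ≤ _ := by
        refine sqrt_mul_add_le_mul_of_le_sq_mul ha0.le ha1.le
          (Real.one_le_rpow hr (by positivity)) ?_
        rw [Real.rpow_one_div_two_pow_succ_sq (by positivity)]
        exact ih (by omega)

/-- If a nonnegative sequence satisfies `f t ≤ √(a₀ f_{t-1}) + a₁` for `t = 1,…,T` with
`a₀, a₁ > 0` and `f 0 > 2a₁ + a₀`, then
`f t ≤ (f 0/(2a₁+a₀))^(2⁻ᵗ) · (2a₁+a₀)` for all `t ≤ T`. -/
theorem stmt4 (T : ℕ) (f : ℕ → ℝ) (a0 a1 : ℝ)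
    (ha0 : 0 < a0) (ha1 : 0 < a1)
    (hfnonneg : ∀ t ≤ T, 0 ≤ f t)
    (hf0 : 2 * a1 + a0 < f 0)
    (hrec : ∀ t, 1 ≤ t → t ≤ T → f t ≤ Real.sqrt (a0 * f (t - 1)) + a1) :
    ∀ t ≤ T, f t ≤ (f 0 / (2 * a1 + a0)) ^ ((1 : ℝ) / 2 ^ t) * (2 * a1 + a0) :=
  stmt4_general T f a0 a1 ha0 ha1 hf0 hrec
end

section
/- Let K be a closed cone in R^n. For any u ∈ R^n, the Euclidean norm of the projection of u onto K equals the supremum of ⟨u, v⟩ over v in K intersected with the closed unit ball: ||P_K(u)||_2 = sup_{v ∈ K ∩ B_2} ⟨u, v⟩. -/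
open scoped RealInnerProductSpace

/-- For a closed cone `K ⊆ ℝⁿ` (containing 0) and any `u`, the norm of a metric
projection of `u` onto `K` equals `sup {⟪u, v⟫ : v ∈ K ∩ B₂}`. -/
theorem stmt6 (n : ℕ) (K : Set (EuclideanSpace ℝ (Fin n)))
    (hKclosed : IsClosed K) (hK0 : (0 : EuclideanSpace ℝ (Fin n)) ∈ K)
    (hcone : ∀ t : ℝ, 0 ≤ t → ∀ x ∈ K, t • x ∈ K)
    (u p : EuclideanSpace ℝ (Fin n)) (hp : p ∈ K)
    (hmin : ∀ w ∈ K, ‖u - p‖ ≤ ‖u - w‖) :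
    ‖p‖ = sSup ((fun v => ⟪u, v⟫) '' (K ∩ Metric.closedBall 0 1)) := by
  have hsq : ∀ t : ℝ, 0 ≤ t → ∀ w ∈ K,
      ‖p‖ ^ 2 - 2 * ⟪u, p⟫ ≤ t ^ 2 * ‖w‖ ^ 2 - 2 * (t * ⟪u, w⟫) := by
    intro t ht w hw
    have h1 := hmin (t • w) (hcone t ht w hw)
    have h2 : ‖u - p‖ ^ 2 ≤ ‖u - t • w‖ ^ 2 :=
      pow_le_pow_left₀ (norm_nonneg _) h1 2
    rw [norm_sub_sq_real, norm_sub_sq_real, inner_smul_right, norm_smul,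
      Real.norm_eq_abs, abs_of_nonneg ht, mul_pow] at h2
    linarith
  -- ⟪u, p⟫ = ‖p‖²
  have hab : ⟪u, p⟫ = ‖p‖ ^ 2 := by
    have h0 : ‖p‖ ^ 2 - 2 * ⟪u, p⟫ ≤ 0 := by linarith [hsq 0 le_rfl p hp]
    rcases eq_or_lt_of_le (norm_nonneg p) with h | h
    · have hp0 : p = 0 := by rw [← norm_eq_zero]; exact h.symm
      simp [hp0]
    · have hb : (0:ℝ) < ‖p‖ ^ 2 := by positivity
      have ha : 0 ≤ ⟪u, p⟫ / ‖p‖ ^ 2 := by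
        apply div_nonneg _ hb.le; linarith
      have h1 := hsq (⟪u, p⟫ / ‖p‖ ^ 2) ha p hp
      have heq : (⟪u, p⟫ / ‖p‖ ^ 2) ^ 2 * ‖p‖ ^ 2 - 2 * ((⟪u, p⟫ / ‖p‖ ^ 2) * ⟪u, p⟫)
          = -(⟪u, p⟫ ^ 2) / ‖p‖ ^ 2 := by
        field_simp
        ring
      rw [heq] at h1
      have h2 := (le_div_iff₀ hb).mp h1
      have h3 : (⟪u, p⟫ - ‖p‖ ^ 2) ^ 2 ≤ 0 := by nlinarith
      have h4 : ⟪u, p⟫ - ‖p‖ ^ 2 = 0 := by nlinarith [sq_nonneg (⟪u, p⟫ - ‖p‖ ^ 2)]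
      linarith
  -- upper bound
  have hub : ∀ x ∈ (fun v => ⟪u, v⟫) '' (K ∩ Metric.closedBall 0 1), x ≤ ‖p‖ := by
    rintro x ⟨v, ⟨hvK, hvB⟩, rfl⟩
    show ⟪u, v⟫ ≤ ‖p‖
    have hv1 : ‖v‖ ≤ 1 := by
      simpa [Metric.mem_closedBall, dist_eq_norm] using hvB
    have hv2 : ‖v‖ ^ 2 ≤ 1 := by nlinarith [norm_nonneg v]
    rcases le_or_gt ⟪u, v⟫ 0 with hc | hc
    · exact hc.trans (norm_nonneg p)
    · have h1 := hsq ⟪u, v⟫ hc.le v hvK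
      rw [hab] at h1
      have h2 : ⟪u, v⟫ ^ 2 * ‖v‖ ^ 2 ≤ ⟪u, v⟫ ^ 2 * 1 :=
        mul_le_mul_of_nonneg_left hv2 (sq_nonneg _)
      nlinarith [norm_nonneg p, mul_pos hc hc]
  -- ‖p‖ is attained
  have hmem : ‖p‖ ∈ (fun v => ⟪u, v⟫) '' (K ∩ Metric.closedBall 0 1) := by
    rcases eq_or_ne p 0 with rfl | hne
    · exact ⟨0, ⟨hK0, by simp⟩, by simp⟩
    · have hnp : (0:ℝ) < ‖p‖ := norm_pos_iff.mpr hne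
      refine ⟨‖p‖⁻¹ • p, ⟨hcone _ (by positivity) p hp, ?_⟩, ?_⟩
      · simp [Metric.mem_closedBall, dist_eq_norm, norm_smul, abs_of_nonneg hnp.le,
          inv_mul_cancel₀ hnp.ne']
      · show ⟪u, ‖p‖⁻¹ • p⟫ = ‖p‖
        rw [inner_smul_right, hab]
        field_simp
  exact (IsGreatest.csSup_eq ⟨hmem, fun x hx => hub x hx⟩).symm
end

section
/- Let U ⊂ R^n be a closed set containing 0, and let K be a closed cone with U ⊂ K. Then for every v ∈ R^n, ||P_U(v)||_2 ≤ 2||P_K(v)||_2. -/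
open scoped RealInnerProductSpace

/-- If `U` is a closed set containing 0 and `K` a closed cone with `U ⊆ K`, then for
every `v`, any metric projection `p` of `v` onto `U` and `q` of `v` onto `K` satisfy
`‖p‖ ≤ 2‖q‖`. -/
theorem stmt8 (n : ℕ) (U K : Set (EuclideanSpace ℝ (Fin n)))
    (hUclosed : IsClosed U) (hKclosed : IsClosed K)
    (hU0 : (0 : EuclideanSpace ℝ (Fin n)) ∈ U) (hUK : U ⊆ K)
    (hcone : ∀ t : ℝ, 0 ≤ t → ∀ x ∈ K, t • x ∈ K)
    (v p q : EuclideanSpace ℝ (Fin n))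
    (hp : p ∈ U) (hpmin : ∀ w ∈ U, ‖v - p‖ ≤ ‖v - w‖)
    (hq : q ∈ K) (hqmin : ∀ w ∈ K, ‖v - q‖ ≤ ‖v - w‖) :
    ‖p‖ ≤ 2 * ‖q‖ := by
  have hpK : p ∈ K := hUK hp
  -- minimality of p against 0 ∈ U
  have e2 : ‖v - p‖ ≤ ‖v‖ := by simpa using hpmin 0 hU0
  -- minimality of q against (1/2) • p ∈ K
  have hhalf : (1/2 : ℝ) • p ∈ K := hcone _ (by norm_num) p hpK
  have e1 : ‖v - q‖ ≤ ‖v - (1/2 : ℝ) • p‖ := hqmin _ hhalf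
  have expq := norm_sub_sq_real v q
  -- key : ⟪v, q⟫ ≤ ‖q‖ ^ 2
  have key : ⟪v, q⟫ ≤ ‖q‖ ^ 2 := by
    apply le_of_forall_pos_le_add
    intro ε hε
    have hq2 : (0:ℝ) < ‖q‖ ^ 2 + 1 := by positivity
    have hδ : 0 < ε / (‖q‖ ^ 2 + 1) := by positivity
    set δ : ℝ := ε / (‖q‖ ^ 2 + 1) with hδdef
    have htK : (1 + δ) • q ∈ K := hcone (1 + δ) (by linarith) q hq
    have h := hqmin _ htK
    have hsq : ‖v - q‖ ^ 2 ≤ ‖v - (1 + δ) • q‖ ^ 2 := by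
      have := pow_le_pow_left₀ (norm_nonneg _) h 2
      simpa using this
    have expt := norm_sub_sq_real v ((1 + δ) • q)
    have i2 : ⟪v, (1 + δ) • q⟫ = (1 + δ) * ⟪v, q⟫ := real_inner_smul_right v q (1 + δ)
    have n2 : ‖(1 + δ) • q‖ = (1 + δ) * ‖q‖ := by
      rw [norm_smul, Real.norm_eq_abs, abs_of_pos (by linarith : (0:ℝ) < 1 + δ)]
    rw [expt, i2, n2] at hsq
    rw [expq] at hsq
    -- hsq: ‖v‖² - 2⟪v,q⟫ + ‖q‖² ≤ ‖v‖² - 2(1+δ)⟪v,q⟫ + (1+δ)²‖q‖²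
    -- i.e. 2δ⟪v,q⟫ ≤ (2δ + δ²)‖q‖², so ⟪v,q⟫ ≤ (1 + δ/2)‖q‖² ≤ ‖q‖² + ε
    have h2 : 2 * δ * ⟪v, q⟫ ≤ 2 * δ * ((1 + δ/2) * ‖q‖ ^ 2) := by nlinarith
    have h3 : ⟪v, q⟫ ≤ (1 + δ/2) * ‖q‖ ^ 2 :=
      le_of_mul_le_mul_left (by linarith) (by linarith : (0:ℝ) < 2 * δ)
    have h4 : δ * ‖q‖ ^ 2 ≤ ε := by
      rw [hδdef, div_mul_eq_mul_div, div_le_iff₀ hq2]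
      nlinarith [sq_nonneg ‖q‖]
    nlinarith
  -- final combination
  have expp := norm_sub_sq_real v p
  have exph := norm_sub_sq_real v ((1/2 : ℝ) • p)
  have i3 : ⟪v, (1/2 : ℝ) • p⟫ = (1/2) * ⟪v, p⟫ := real_inner_smul_right v p (1/2)
  have n3 : ‖(1/2 : ℝ) • p‖ = (1/2) * ‖p‖ := by
    rw [norm_smul, Real.norm_eq_abs]; norm_num
  have e1sq : ‖v - q‖ ^ 2 ≤ ‖v - (1/2 : ℝ) • p‖ ^ 2 := by
    have := pow_le_pow_left₀ (norm_nonneg _) e1 2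
    simpa using this
  have e2sq : ‖v - p‖ ^ 2 ≤ ‖v‖ ^ 2 := by
    have := pow_le_pow_left₀ (norm_nonneg _) e2 2
    simpa using this
  rw [exph, i3, n3, expq] at e1sq
  rw [expp] at e2sq
  nlinarith [norm_nonneg p, norm_nonneg q, sq_nonneg (‖p‖ - 2 * ‖q‖), sq_nonneg (‖p‖ + 2 * ‖q‖)]
end

section
/- Let K ⊂ R^n be a closed cone, a ∈ R^n and b ∈ K. Then ||P_K(a) − b||_2 ≤ 2·sup_{w ∈ (K−K) ∩ B_2} ⟨a − b, w⟩, i.e., the projection error is bounded by twice the dual norm of a − b with respect to the set K_{(1)} = (K − K) ∩ B_2. -/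
open scoped RealInnerProductSpace

/-- For a closed cone `K ⊆ ℝⁿ`, `b ∈ K` and a metric projection `p` of `a` onto `K`,
`‖p - b‖ ≤ 2 · sup {⟪a - b, w⟫ : w ∈ (K - K) ∩ B₂}`. -/
theorem stmt10 (n : ℕ) (K : Set (EuclideanSpace ℝ (Fin n)))
    (hKclosed : IsClosed K) (hK0 : (0 : EuclideanSpace ℝ (Fin n)) ∈ K)
    (hcone : ∀ t : ℝ, 0 ≤ t → ∀ x ∈ K, t • x ∈ K)
    (a b p : EuclideanSpace ℝ (Fin n)) (hb : b ∈ K)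
    (hp : p ∈ K) (hmin : ∀ w ∈ K, ‖a - p‖ ≤ ‖a - w‖) :
    ‖p - b‖ ≤ 2 * sSup ((fun w => ⟪a - b, w⟫) ''
      ({w | ∃ x ∈ K, ∃ y ∈ K, w = x - y} ∩ Metric.closedBall 0 1)) := by
  set S : Set ℝ := (fun w => ⟪a - b, w⟫) ''
      ({w | ∃ x ∈ K, ∃ y ∈ K, w = x - y} ∩ Metric.closedBall 0 1) with hS
  have hBdd : BddAbove S := by
    refine ⟨‖a - b‖, ?_⟩
    rintro z ⟨w, ⟨_, hw2⟩, rfl⟩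
    have hw : ‖w‖ ≤ 1 := by simpa using hw2
    calc ⟪a - b, w⟫ ≤ ‖a - b‖ * ‖w‖ := real_inner_le_norm _ _
      _ ≤ ‖a - b‖ * 1 := by
          exact mul_le_mul_of_nonneg_left hw (norm_nonneg _)
      _ = ‖a - b‖ := mul_one _
  have h0S : (0 : ℝ) ∈ S := by
    refine ⟨0, ⟨⟨b, hb, b, hb, by simp⟩, by simp⟩, by simp⟩
  have hSnonneg : 0 ≤ sSup S := le_csSup hBdd h0S
  -- key inequality: ‖p - b‖² ≤ 2⟪a - b, p - b⟫
  have hkey : ‖p - b‖ ^ 2 ≤ 2 * ⟪a - b, p - b⟫ := by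
    have h1 : ‖a - p‖ ≤ ‖a - b‖ := hmin b hb
    have h2 : ‖a - p‖ ^ 2 ≤ ‖a - b‖ ^ 2 := by
      exact pow_le_pow_left₀ (norm_nonneg _) h1 2
    have h3 : a - p = (a - b) - (p - b) := by abel
    have h4 : ‖(a - b) - (p - b)‖ ^ 2
        = ‖a - b‖ ^ 2 - 2 * ⟪a - b, p - b⟫ + ‖p - b‖ ^ 2 := by
      rw [norm_sub_sq_real]
    rw [h3, h4] at h2
    linarith
  rcases eq_or_ne p b with rfl | hne
  · simpa using by linarith
  · set r : ℝ := ‖p - b‖ with hr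
    have hrpos : 0 < r := by
      simpa [hr] using norm_pos_iff.2 (sub_ne_zero.2 hne)
    set u : EuclideanSpace ℝ (Fin n) := r⁻¹ • (p - b) with hu
    have huK : u ∈ {w | ∃ x ∈ K, ∃ y ∈ K, w = x - y} := by
      refine ⟨r⁻¹ • p, hcone _ (by positivity) _ hp,
        r⁻¹ • b, hcone _ (by positivity) _ hb, ?_⟩
      rw [hu, smul_sub]
    have huB : u ∈ Metric.closedBall (0 : EuclideanSpace ℝ (Fin n)) 1 := by
      simp only [Metric.mem_closedBall, dist_zero_right, hu, norm_smul]
      rw [norm_inv, Real.norm_eq_abs, abs_of_pos hrpos, ← hr,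
        inv_mul_cancel₀ (ne_of_gt hrpos)]
    have hmem : ⟪a - b, u⟫ ∈ S := ⟨u, ⟨huK, huB⟩, rfl⟩
    have hval : r / 2 ≤ ⟪a - b, u⟫ := by
      have : ⟪a - b, u⟫ = r⁻¹ * ⟪a - b, p - b⟫ := by
        rw [hu, real_inner_smul_right]
      rw [this]
      have h6 : r⁻¹ * r ^ 2 = r := by field_simp
      nlinarith [mul_le_mul_of_nonneg_left hkey (le_of_lt (inv_pos.2 hrpos))]
    have : r / 2 ≤ sSup S := le_trans hval (le_csSup hBdd hmem)
    linarith
end
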